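/- arXiv:1910.05486 — 5 statements merged into one kernel-verified Lean document; each statement's English description precedes it below -/
import Mathlib

section
/- (Neyman–Pearson Lemma, sufficiency.) Let α ∈ (0,1) and let δ* be a decision function for which there exists a constant c ≥ 0 such that δ*(x,u) = 1 whenever Λ(x) > c and δ*(x,u) = 0 whenever Λ(x) < c, and whose size satisfies α_{δ*} = α. Then δ* is a most powerful decision function of level α: for every decision function δ with α_δ ≤ α one has π_{δ*} ≥ π_δ. -/
/-!
Pointwise, `(δ - δ*) (Λ - c) f₀ ≤ 0`: where `Λ > c` the test `δ*` is `1 ≥ δ`, where `Λ < c` it is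
`0 ≤ δ`, and where `Λ = c` the middle factor vanishes. Integrating gives
`π_δ - π_{δ*} ≤ c (α_δ - α_{δ*}) ≤ 0`, because `c ≥ 0` and `α_δ ≤ α = α_{δ*}`.
-/

open MeasureTheory

/-- The size of a (randomized) decision function `δ : 𝔛 × [0,1] → {0,1}`:
`α_δ = ∫₀¹ ∫_𝔛 δ(x,u) f₀(x) dν(x) du`. -/
noncomputable def size {𝔛 : Type*} [MeasurableSpace 𝔛] (ν : Measure 𝔛) (f₀ : 𝔛 → ℝ)
    (δ : 𝔛 × ℝ → ℝ) : ℝ :=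
  ∫ p, δ p * f₀ p.1 ∂(ν.prod (volume.restrict (Set.Icc (0 : ℝ) 1)))

/-- The power of a decision function: `π_δ = ∫₀¹ ∫_𝔛 δ(x,u) Λ(x) f₀(x) dν(x) du`,
where `Λ = f₁/f₀` (with the convention that the ratio is `0` when `f₀(x) = 0`). -/
noncomputable def power {𝔛 : Type*} [MeasurableSpace 𝔛] (ν : Measure 𝔛) (f₀ f₁ : 𝔛 → ℝ)
    (δ : 𝔛 × ℝ → ℝ) : ℝ :=
  ∫ p, δ p * (f₁ p.1 / f₀ p.1) * f₀ p.1 ∂(ν.prod (volume.restrict (Set.Icc (0 : ℝ) 1)))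

open Set

lemma mem_Icc_of_eq_zero_or_eq_one {R : Type*} [Zero R] [One R] [Preorder R] [ZeroLEOneClass R]
    {x : R} (h : x = 0 ∨ x = 1) : x ∈ Icc (0 : R) 1 := by
  rcases h with rfl | rfl
  exacts [⟨le_rfl, zero_le_one⟩, ⟨zero_le_one, le_rfl⟩]

lemma mul_mul_sub_le_of_threshold {R : Type*} [CommRing R] [LinearOrder R] [IsStrictOrderedRing R]
    {d dstar l w c : R} (hd : d ∈ Icc 0 1) (hw : 0 ≤ w)
    (hreject : c < l → dstar = 1) (haccept : l < c → dstar = 0) :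
    d * l * w - dstar * l * w ≤ c * (d * w - dstar * w) := by
  have hsign : (d - dstar) * (l - c) ≤ 0 := by
    rcases lt_trichotomy l c with hlt | rfl | hgt
    · rw [haccept hlt, sub_zero]
      exact mul_nonpos_of_nonneg_of_nonpos hd.1 (by linarith)
    · simp
    · rw [hreject hgt]
      exact mul_nonpos_of_nonpos_of_nonneg (by linarith [hd.2]) (by linarith)
  linear_combination mul_nonpos_of_nonpos_of_nonneg hsign hw

theorem integral_mul_mul_sub_le_of_threshold {Ω : Type*} [MeasurableSpace Ω] {μ : Measure Ω}
    {φ φstar L w : Ω → ℝ} {c : ℝ} (hφ : ∀ ω, φ ω ∈ Icc 0 1) (hw : ∀ ω, 0 ≤ w ω)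
    (hreject : ∀ ω, c < L ω → φstar ω = 1) (haccept : ∀ ω, L ω < c → φstar ω = 0)
    (hφw : Integrable (fun ω ↦ φ ω * w ω) μ) (hφstarw : Integrable (fun ω ↦ φstar ω * w ω) μ)
    (hφLw : Integrable (fun ω ↦ φ ω * L ω * w ω) μ)
    (hφstarLw : Integrable (fun ω ↦ φstar ω * L ω * w ω) μ) :
    ∫ ω, φ ω * L ω * w ω ∂μ - ∫ ω, φstar ω * L ω * w ω ∂μ ≤
      c * (∫ ω, φ ω * w ω ∂μ - ∫ ω, φstar ω * w ω ∂μ) := by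
  rw [← integral_sub hφLw hφstarLw, ← integral_sub hφw hφstarw, ← integral_const_mul]
  exact integral_mono (hφLw.sub hφstarLw) ((hφw.sub hφstarw).const_mul c) fun ω ↦
    mul_mul_sub_le_of_threshold (hφ ω) (hw ω) (hreject ω) (haccept ω)

namespace MeasureTheory

variable {α β : Type*} [MeasurableSpace α] [MeasurableSpace β] {μ : Measure α}

lemma Integrable.div_mul_self {f g : α → ℝ} (hf : Integrable f μ)
    (hg : AEStronglyMeasurable g μ) : Integrable (fun x ↦ f x / g x * g x) μ := by
  refine hf.mono ((hf.aemeasurable.div hg.aemeasurable).mul hg.aemeasurable).aestronglyMeasurable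
    (ae_of_all _ fun x ↦ ?_)
  rcases eq_or_ne (g x) 0 with hx | hx
  · simp [hx]
  · rw [div_mul_cancel₀ _ hx]

lemma Integrable.mul_comp_fst_of_mem_Icc {g : α → ℝ} (hg : Integrable g μ) (ν : Measure β)
    [IsFiniteMeasure ν] {ψ : α × β → ℝ} (hψm : AEStronglyMeasurable ψ (μ.prod ν))
    (hψ : ∀ p, ψ p ∈ Icc 0 1) : Integrable (fun p ↦ ψ p * g p.1) (μ.prod ν) :=
  (hg.comp_fst ν).bdd_mul (c := 1) hψm <| ae_of_all _ fun p ↦ by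
    rw [Real.norm_eq_abs, abs_le]
    constructor <;> linarith [(hψ p).1, (hψ p).2]

end MeasureTheory

theorem neyman_pearson_sufficiency_general
    {𝔛 : Type*} [MeasurableSpace 𝔛] (ν : Measure 𝔛)
    (f₀ f₁ : 𝔛 → ℝ)
    (hf₀nonneg : ∀ x, 0 ≤ f₀ x)
    (hf₀int : ∫ x, f₀ x ∂ν = 1) (hf₁int : ∫ x, f₁ x ∂ν = 1)
    (α : ℝ)
    (δstar : 𝔛 × ℝ → ℝ) (hδstarMeas : Measurable δstar)
    (hδstar01 : ∀ p, δstar p = 0 ∨ δstar p = 1)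
    (c : ℝ) (hc : 0 ≤ c)
    (hreject : ∀ x u, f₁ x / f₀ x > c → δstar (x, u) = 1)
    (haccept : ∀ x u, f₁ x / f₀ x < c → δstar (x, u) = 0)
    (hsize : size ν f₀ δstar = α) :
    ∀ δ : 𝔛 × ℝ → ℝ, Measurable δ → (∀ p, δ p = 0 ∨ δ p = 1) →
      size ν f₀ δ ≤ α → power ν f₀ f₁ δ ≤ power ν f₀ f₁ δstar := by
  intro δ hδMeas hδ01 hδsize
  have hf₀ : Integrable f₀ ν := .of_integral_ne_zero (by simp [hf₀int])
  have hf₁ : Integrable f₁ ν := .of_integral_ne_zero (by simp [hf₁int])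
  have hδI p := mem_Icc_of_eq_zero_or_eq_one (hδ01 p)
  have hδstarI p := mem_Icc_of_eq_zero_or_eq_one (hδstar01 p)
  have hweighted {g : 𝔛 → ℝ} (hg : Integrable g ν) {ψ : 𝔛 × ℝ → ℝ} (hψm : Measurable ψ)
      (hψ : ∀ p, ψ p ∈ Icc 0 1) :=
    hg.mul_comp_fst_of_mem_Icc (volume.restrict (Icc (0 : ℝ) 1)) hψm.aestronglyMeasurable hψ
  have hpower {ψ : 𝔛 × ℝ → ℝ} (hψm : Measurable ψ) (hψ : ∀ p, ψ p ∈ Icc 0 1) :=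
    (hweighted (hf₁.div_mul_self hf₀.aestronglyMeasurable) hψm hψ).congr
      (ae_of_all _ fun _ ↦ (mul_assoc ..).symm)
  have key : power ν f₀ f₁ δ - power ν f₀ f₁ δstar ≤ c * (size ν f₀ δ - size ν f₀ δstar) :=
    integral_mul_mul_sub_le_of_threshold (L := fun p ↦ f₁ p.1 / f₀ p.1) hδI
      (fun p ↦ hf₀nonneg p.1) (fun p ↦ hreject p.1 p.2) (fun p ↦ haccept p.1 p.2)
      (hweighted hf₀ hδMeas hδI) (hweighted hf₀ hδstarMeas hδstarI)
      (hpower hδMeas hδI) (hpower hδstarMeas hδstarI)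
  linarith [mul_nonpos_of_nonneg_of_nonpos hc (sub_nonpos.2 (hδsize.trans hsize.ge))]

/-- **Neyman–Pearson Lemma (sufficiency).** If `δ*` is a `{0,1}`-valued measurable decision
function such that for some constant `c ≥ 0` it decides `1` whenever `Λ(x) > c` and `0`
whenever `Λ(x) < c`, and its size is exactly `α ∈ (0,1)`, then `δ*` is most powerful of
level `α`: every decision function `δ` with size `α_δ ≤ α` has `π_δ ≤ π_{δ*}`. -/
theorem neyman_pearson_sufficiency
    {𝔛 : Type*} [MeasurableSpace 𝔛] (ν : Measure 𝔛) [SigmaFinite ν]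
    (f₀ f₁ : 𝔛 → ℝ) (hf₀meas : Measurable f₀) (hf₁meas : Measurable f₁)
    (hf₀nonneg : ∀ x, 0 ≤ f₀ x) (hf₁nonneg : ∀ x, 0 ≤ f₁ x)
    (hf₀int : ∫ x, f₀ x ∂ν = 1) (hf₁int : ∫ x, f₁ x ∂ν = 1)
    (α : ℝ) (hα : α ∈ Set.Ioo (0 : ℝ) 1)
    (δstar : 𝔛 × ℝ → ℝ) (hδstarMeas : Measurable δstar)
    (hδstar01 : ∀ p, δstar p = 0 ∨ δstar p = 1)
    (c : ℝ) (hc : 0 ≤ c)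
    (hreject : ∀ x u, f₁ x / f₀ x > c → δstar (x, u) = 1)
    (haccept : ∀ x u, f₁ x / f₀ x < c → δstar (x, u) = 0)
    (hsize : size ν f₀ δstar = α) :
    ∀ δ : 𝔛 × ℝ → ℝ, Measurable δ → (∀ p, δ p = 0 ∨ δ p = 1) →
      size ν f₀ δ ≤ α → power ν f₀ f₁ δ ≤ power ν f₀ f₁ δstar :=
  neyman_pearson_sufficiency_general ν f₀ f₁ hf₀nonneg hf₀int hf₁int α δstar hδstarMeas hδstar01 c
    hc hreject haccept hsize
end

section
/- (Proposition 1(b), concavity.) The ROC function α ↦ ρ(α) is concave on [0,1]: for all α₁, α₂ ∈ [0,1] and a ∈ [0,1], ρ(a·α₁ + (1−a)·α₂) ≥ a·ρ(α₁) + (1−a)·ρ(α₂). -/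
/-!
A single uniform variable `u ∈ [0,1]` can randomize twice: for `a ∈ (0,1)`, run `δ₁` at `u / a`
when `u < a` and `δ₂` at `(u - a) / (1 - a)` otherwise. The two affine rescalings carry Lebesgue
measure on `[0,a]` and `[a,1]` to `a` resp. `1 - a` times Lebesgue measure on `[0,1]`, so size and
power of the mixed rule are the corresponding convex combinations. Hence
`a • S α₁ + (1 - a) • S α₂ ⊆ S (a * α₁ + (1 - a) * α₂)` for the sets `S α` of powers attainable at
size `≤ α`, and taking suprema (these sets are bounded by `∫ |f₁|`) gives concavity.
-/

open MeasureTheory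

/-- The ROC function: `ρ(α) = sup{π_δ : δ a decision function with α_δ ≤ α}`. -/
noncomputable def ROC {𝔛 : Type*} [MeasurableSpace 𝔛] (ν : Measure 𝔛) (f₀ f₁ : 𝔛 → ℝ)
    (α : ℝ) : ℝ :=
  sSup {π : ℝ | ∃ δ : 𝔛 × ℝ → ℝ, Measurable δ ∧ (∀ p, δ p = 0 ∨ δ p = 1) ∧
    size ν f₀ δ ≤ α ∧ π = power ν f₀ f₁ δ}

open Set
open scoped NNReal Pointwise

lemma smul_sSup_add_smul_sSup_le {s t u : Set ℝ} {a b : ℝ} (ha : 0 ≤ a) (hb : 0 ≤ b)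
    (hs : s.Nonempty) (hs' : BddAbove s) (ht : t.Nonempty) (ht' : BddAbove t) (hu : BddAbove u)
    (hsub : a • s + b • t ⊆ u) : a * sSup s + b * sSup t ≤ sSup u := by
  rw [← smul_eq_mul, ← smul_eq_mul, ← Real.sSup_smul_of_nonneg ha, ← Real.sSup_smul_of_nonneg hb,
    ← csSup_add (hs.smul_set) (hs'.smul_of_nonneg ha) (ht.smul_set) (ht'.smul_of_nonneg hb)]
  exact csSup_le_csSup hu (hs.smul_set.add ht.smul_set) hsub

lemma measurableEmbedding_affine (d : ℝ) {c : ℝ} (hc : c ≠ 0) :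
    MeasurableEmbedding fun v : ℝ => d + c * v :=
  (measurableEmbedding_addLeft d).comp (measurableEmbedding_mulLeft₀ hc)

lemma volume_restrict_Icc_eq_smul_map {d e : ℝ} (hde : d < e) :
    (volume : Measure ℝ).restrict (Icc d e) =
      (e - d).toNNReal • (volume.restrict (Icc (0 : ℝ) 1)).map fun v => d + (e - d) * v := by
  have hc : 0 < e - d := sub_pos.mpr hde
  have hvol :
      ENNReal.ofReal (e - d) • (volume : Measure ℝ).map (fun v => d + (e - d) * v) = volume := by
    change _ • volume.map ((d + ·) ∘ ((e - d) * ·)) = _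
    rw [← Measure.map_map (measurable_const_add d) (measurable_const_mul _), ← Measure.map_smul]
    nth_rw 1 [← abs_of_pos hc]
    rw [Real.smul_map_volume_mul_left hc.ne', map_add_left_eq_self]
  have hpre : (fun v : ℝ => d + (e - d) * v) ⁻¹' Icc d e = Icc 0 1 := by
    ext v
    simp only [mem_preimage, mem_Icc]
    constructor <;> rintro ⟨h₁, h₂⟩ <;> constructor <;> nlinarith
  conv_lhs => rw [← hvol]
  rw [Measure.restrict_smul, Measure.restrict_map (measurableEmbedding_affine d hc.ne').measurable
    measurableSet_Icc, hpre]
  rfl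

lemma volume_restrict_Icc_zero_one_eq {a : ℝ} (ha₀ : 0 < a) (ha₁ : a < 1) :
    volume.restrict (Icc (0 : ℝ) 1) =
      a.toNNReal • (volume.restrict (Icc (0 : ℝ) 1)).map (a * ·) +
        (1 - a).toNNReal • (volume.restrict (Icc (0 : ℝ) 1)).map (a + (1 - a) * ·) := by
  have hsplit : volume.restrict (Icc (0 : ℝ) 1) =
      volume.restrict (Icc 0 a) + volume.restrict (Icc a 1) := by
    rw [← Measure.restrict_union_add_inter _ measurableSet_Icc, Icc_union_Icc_eq_Icc ha₀.le ha₁.le,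
      Icc_inter_Icc_eq_singleton ha₀.le ha₁.le, Measure.restrict_eq_zero.mpr Real.volume_singleton,
      add_zero]
  conv_lhs => rw [hsplit]
  rw [volume_restrict_Icc_eq_smul_map ha₀, volume_restrict_Icc_eq_smul_map ha₁]
  simp only [sub_zero, zero_add]

section Split

variable {𝔛 E : Type*}

noncomputable def splitAt (a : ℝ) (F₁ F₂ : 𝔛 × ℝ → E) (p : 𝔛 × ℝ) : E :=
  if p.2 < a then F₁ (p.1, p.2 / a) else F₂ (p.1, (p.2 - a) / (1 - a))

lemma splitAt_mul_comp_fst (a : ℝ) (δ₁ δ₂ : 𝔛 × ℝ → ℝ) (g : 𝔛 → ℝ) :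
    (fun p => splitAt a δ₁ δ₂ p * g p.1) =
      splitAt a (fun p => δ₁ p * g p.1) (fun p => δ₂ p * g p.1) := by
  ext p
  unfold splitAt
  split_ifs <;> rfl

variable [MeasurableSpace 𝔛] [NormedAddCommGroup E] [NormedSpace ℝ E]

lemma integral_prod_Icc_zero_one_eq (μ : Measure 𝔛) [SFinite μ] {a : ℝ} (ha₀ : 0 < a)
    (ha₁ : a < 1) {F : 𝔛 × ℝ → E}
    (hF : Integrable F (μ.prod (volume.restrict (Icc (0 : ℝ) 1)))) :
    ∫ p, F p ∂μ.prod (volume.restrict (Icc (0 : ℝ) 1)) =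
      a • ∫ p, F (p.1, a * p.2) ∂μ.prod (volume.restrict (Icc (0 : ℝ) 1)) +
        (1 - a) • ∫ p, F (p.1, a + (1 - a) * p.2) ∂μ.prod (volume.restrict (Icc (0 : ℝ) 1)) := by
  set m := volume.restrict (Icc (0 : ℝ) 1)
  have hprod_map : ∀ {T : ℝ → ℝ}, Measurable T →
      μ.prod (m.map T) = (μ.prod m).map (Prod.map id T) := fun hT => by
    rw [← Measure.map_prod_map _ _ measurable_id hT, Measure.map_id]
  have hT₁ := measurableEmbedding_affine 0 ha₀.ne'
  have hT₂ := measurableEmbedding_affine a (sub_pos.mpr ha₁).ne'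
  simp only [zero_add] at hT₁
  have hμm : μ.prod m = a.toNNReal • (μ.prod m).map (Prod.map id (a * ·)) +
      (1 - a).toNNReal • (μ.prod m).map (Prod.map id (a + (1 - a) * ·)) := by
    conv_lhs => rw [show m = _ from volume_restrict_Icc_zero_one_eq ha₀ ha₁]
    rw [Measure.prod_add, Measure.prod_smul_right, Measure.prod_smul_right,
      hprod_map hT₁.measurable, hprod_map hT₂.measurable]
  rw [hμm] at hF
  conv_lhs => rw [hμm]
  rw [integral_add_measure (integrable_add_measure.mp hF).1 (integrable_add_measure.mp hF).2,
    integral_smul_nnreal_measure, integral_smul_nnreal_measure,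
    (MeasurableEmbedding.id.prodMap hT₁).integral_map,
    (MeasurableEmbedding.id.prodMap hT₂).integral_map, NNReal.smul_def, NNReal.smul_def,
    Real.coe_toNNReal _ ha₀.le, Real.coe_toNNReal _ (sub_pos.mpr ha₁).le]
  rfl

lemma integral_splitAt (μ : Measure 𝔛) [SFinite μ]
    {a : ℝ} (ha₀ : 0 < a) (ha₁ : a < 1) {F₁ F₂ : 𝔛 × ℝ → E}
    (hF : Integrable (splitAt a F₁ F₂) (μ.prod (volume.restrict (Icc (0 : ℝ) 1)))) :
    ∫ p, splitAt a F₁ F₂ p ∂μ.prod (volume.restrict (Icc (0 : ℝ) 1)) =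
      a • ∫ p, F₁ p ∂μ.prod (volume.restrict (Icc (0 : ℝ) 1)) +
        (1 - a) • ∫ p, F₂ p ∂μ.prod (volume.restrict (Icc (0 : ℝ) 1)) := by
  have hae : ∀ᵐ p ∂μ.prod (volume.restrict (Icc (0 : ℝ) 1)), p.2 ∈ Ico 0 1 :=
    Measure.quasiMeasurePreserving_snd.ae <|
      (Measure.restrict_congr_set (Ico_ae_eq_Icc (μ := volume) (a := (0 : ℝ)) (b := 1))) ▸
        ae_restrict_mem measurableSet_Ico
  have hsub : 0 < 1 - a := sub_pos.mpr ha₁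
  rw [integral_prod_Icc_zero_one_eq μ ha₀ ha₁ hF]
  congr 2 <;> refine integral_congr_ae (hae.mono fun p ⟨hp₀, hp₁⟩ => ?_)
  · have : a * p.2 < a := mul_lt_of_lt_one_right ha₀ hp₁
    simp [splitAt, this, ha₀.ne']
  · have : ¬ a + (1 - a) * p.2 < a := by nlinarith
    simp [splitAt, this, hsub.ne']

end Split

section DecisionFunction

variable {α : Type*} [MeasurableSpace α]

structure IsDecisionFunction (δ : α → ℝ) : Prop where
  measurable : Measurable δ
  eq_zero_or_eq_one : ∀ p, δ p = 0 ∨ δ p = 1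

lemma IsDecisionFunction.abs_le_one {δ : α → ℝ} (hδ : IsDecisionFunction δ) (p : α) :
    |δ p| ≤ 1 := by
  rcases hδ.eq_zero_or_eq_one p with h | h <;> simp [h]

lemma IsDecisionFunction.integrable_mul {μ : Measure α} {δ G : α → ℝ} (hδ : IsDecisionFunction δ)
    (hG : Integrable G μ) : Integrable (fun p => δ p * G p) μ :=
  hG.bdd_mul hδ.measurable.aestronglyMeasurable (.of_forall hδ.abs_le_one)

variable {𝔛 : Type*} [MeasurableSpace 𝔛]

lemma IsDecisionFunction.splitAt {a : ℝ} {δ₁ δ₂ : 𝔛 × ℝ → ℝ} (hδ₁ : IsDecisionFunction δ₁)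
    (hδ₂ : IsDecisionFunction δ₂) : IsDecisionFunction (splitAt a δ₁ δ₂) where
  measurable := Measurable.ite (measurableSet_lt measurable_snd measurable_const)
    (hδ₁.measurable.comp (measurable_fst.prodMk (measurable_snd.div_const a)))
    (hδ₂.measurable.comp (measurable_fst.prodMk ((measurable_snd.sub_const a).div_const _)))
  eq_zero_or_eq_one p := by
    unfold _root_.splitAt
    split_ifs
    exacts [hδ₁.eq_zero_or_eq_one _, hδ₂.eq_zero_or_eq_one _]

lemma integral_splitAt_mul (ν : Measure 𝔛) [SFinite ν] {a : ℝ} (ha₀ : 0 < a) (ha₁ : a < 1)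
    {δ₁ δ₂ : 𝔛 × ℝ → ℝ} (hδ₁ : IsDecisionFunction δ₁) (hδ₂ : IsDecisionFunction δ₂)
    {g : 𝔛 → ℝ} (hg : Integrable g ν) :
    ∫ p, splitAt a δ₁ δ₂ p * g p.1 ∂ν.prod (volume.restrict (Icc (0 : ℝ) 1)) =
      a * ∫ p, δ₁ p * g p.1 ∂ν.prod (volume.restrict (Icc (0 : ℝ) 1)) +
        (1 - a) * ∫ p, δ₂ p * g p.1 ∂ν.prod (volume.restrict (Icc (0 : ℝ) 1)) := by
  have hint := (hδ₁.splitAt hδ₂ (a := a)).integrable_mul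
    (hg.comp_fst (volume.restrict (Icc (0 : ℝ) 1)))
  rw [splitAt_mul_comp_fst] at hint ⊢
  exact integral_splitAt ν ha₀ ha₁ hint

end DecisionFunction

section ROC

variable {𝔛 : Type*} [MeasurableSpace 𝔛] {ν : Measure 𝔛} {f₀ f₁ : 𝔛 → ℝ}

lemma abs_div_mul_self_le (a b : ℝ) : |b / a * a| ≤ |b| := by
  rcases eq_or_ne a 0 with rfl | ha
  · simp
  · rw [div_mul_cancel₀ _ ha]

lemma integrable_div_mul_self (hf₀ : AEStronglyMeasurable f₀ ν) (hf₁ : Integrable f₁ ν) :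
    Integrable (fun x => f₁ x / f₀ x * f₀ x) ν :=
  hf₁.mono ((hf₁.aemeasurable.div hf₀.aemeasurable).mul hf₀.aemeasurable).aestronglyMeasurable
    (.of_forall fun x => abs_div_mul_self_le (f₀ x) (f₁ x))

lemma power_eq_integral (δ : 𝔛 × ℝ → ℝ) :
    power ν f₀ f₁ δ = ∫ p, δ p * (f₁ p.1 / f₀ p.1 * f₀ p.1)
      ∂ν.prod (volume.restrict (Icc (0 : ℝ) 1)) := by
  simp only [power, mul_assoc]

lemma power_le_integral_abs [SFinite ν] (hf₁ : Integrable f₁ ν) {δ : 𝔛 × ℝ → ℝ}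
    (hδ : IsDecisionFunction δ) : power ν f₀ f₁ δ ≤ ∫ x, |f₁ x| ∂ν := by
  have hbound : ∀ p : 𝔛 × ℝ, ‖δ p * (f₁ p.1 / f₀ p.1 * f₀ p.1)‖ ≤ |f₁ p.1| := fun p => by
    rw [Real.norm_eq_abs, abs_mul]
    exact (mul_le_of_le_one_left (abs_nonneg _) (hδ.abs_le_one p)).trans (abs_div_mul_self_le _ _)
  calc power ν f₀ f₁ δ ≤ ‖power ν f₀ f₁ δ‖ := Real.le_norm_self _
    _ ≤ ∫ p, |f₁ p.1| ∂ν.prod (volume.restrict (Icc (0 : ℝ) 1)) := by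
      rw [power_eq_integral]
      exact norm_integral_le_of_norm_le (hf₁.abs.comp_fst _) (.of_forall hbound)
    _ = ∫ x, |f₁ x| ∂ν := by rw [integral_fun_fst (fun x => |f₁ x|)]; simp

variable (ν f₀ f₁) in
def rocSet (α : ℝ) : Set ℝ :=
  {π : ℝ | ∃ δ : 𝔛 × ℝ → ℝ, Measurable δ ∧ (∀ p, δ p = 0 ∨ δ p = 1) ∧
    size ν f₀ δ ≤ α ∧ π = power ν f₀ f₁ δ}

lemma zero_mem_rocSet {α : ℝ} (hα : 0 ≤ α) : 0 ∈ rocSet ν f₀ f₁ α :=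
  ⟨0, measurable_const, fun _ => .inl rfl, by simpa [size] using hα, by simp [power]⟩

lemma bddAbove_rocSet [SFinite ν] (hf₁ : Integrable f₁ ν) (α : ℝ) :
    BddAbove (rocSet ν f₀ f₁ α) := by
  refine ⟨∫ x, |f₁ x| ∂ν, ?_⟩
  rintro _ ⟨δ, hm, hv, -, rfl⟩
  exact power_le_integral_abs hf₁ ⟨hm, hv⟩

lemma smul_rocSet_add_smul_rocSet_subset [SFinite ν] (hf₀ : Integrable f₀ ν)
    (hf₁ : Integrable f₁ ν) {a : ℝ} (ha₀ : 0 < a) (ha₁ : a < 1) (α₁ α₂ : ℝ) :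
    a • rocSet ν f₀ f₁ α₁ + (1 - a) • rocSet ν f₀ f₁ α₂ ⊆
      rocSet ν f₀ f₁ (a * α₁ + (1 - a) * α₂) := by
  rintro _ ⟨_, ⟨_, ⟨δ₁, hm₁, hv₁, hs₁, rfl⟩, rfl⟩, _, ⟨_, ⟨δ₂, hm₂, hv₂, hs₂, rfl⟩, rfl⟩, rfl⟩
  have hδ := IsDecisionFunction.splitAt (a := a) ⟨hm₁, hv₁⟩ ⟨hm₂, hv₂⟩
  refine ⟨splitAt a δ₁ δ₂, hδ.measurable, hδ.eq_zero_or_eq_one, ?_, ?_⟩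
  · rw [size, integral_splitAt_mul ν ha₀ ha₁ ⟨hm₁, hv₁⟩ ⟨hm₂, hv₂⟩ hf₀]
    exact add_le_add (mul_le_mul_of_nonneg_left hs₁ ha₀.le)
      (mul_le_mul_of_nonneg_left hs₂ (sub_nonneg.mpr ha₁.le))
  · simp only [smul_eq_mul, power_eq_integral]
    exact (integral_splitAt_mul ν ha₀ ha₁ ⟨hm₁, hv₁⟩ ⟨hm₂, hv₂⟩
      (integrable_div_mul_self hf₀.aestronglyMeasurable hf₁)).symm

end ROC

theorem roc_concave_general
    {𝔛 : Type*} [MeasurableSpace 𝔛] (ν : Measure 𝔛) [SigmaFinite ν]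
    (f₀ f₁ : 𝔛 → ℝ)
    (hf₀int : ∫ x, f₀ x ∂ν = 1) (hf₁int : ∫ x, f₁ x ∂ν = 1) :
    ∀ α₁ ∈ Set.Icc (0 : ℝ) 1, ∀ α₂ ∈ Set.Icc (0 : ℝ) 1, ∀ a ∈ Set.Icc (0 : ℝ) 1,
      a * ROC ν f₀ f₁ α₁ + (1 - a) * ROC ν f₀ f₁ α₂ ≤
        ROC ν f₀ f₁ (a * α₁ + (1 - a) * α₂) := by
  rintro α₁ ⟨hα₁, -⟩ α₂ ⟨hα₂, -⟩ a ⟨ha₀, ha₁⟩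
  rcases ha₀.eq_or_lt with rfl | ha₀
  · simp
  rcases ha₁.eq_or_lt with rfl | ha₁
  · simp
  have hf₀ : Integrable f₀ ν := .of_integral_ne_zero (by simp [hf₀int])
  have hf₁ : Integrable f₁ ν := .of_integral_ne_zero (by simp [hf₁int])
  exact smul_sSup_add_smul_sSup_le ha₀.le (sub_nonneg.mpr ha₁.le)
    ⟨0, zero_mem_rocSet hα₁⟩ (bddAbove_rocSet hf₁ α₁) ⟨0, zero_mem_rocSet hα₂⟩
    (bddAbove_rocSet hf₁ α₂) (bddAbove_rocSet hf₁ _)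
    (smul_rocSet_add_smul_rocSet_subset hf₀ hf₁ ha₀ ha₁ α₁ α₂)

/-- **Proposition 1(b), concavity.** The ROC function `α ↦ ρ(α)` is concave on `[0,1]`:
for all `α₁, α₂ ∈ [0,1]` and `a ∈ [0,1]`,
`ρ(a·α₁ + (1−a)·α₂) ≥ a·ρ(α₁) + (1−a)·ρ(α₂)`. -/
theorem roc_concave
    {𝔛 : Type*} [MeasurableSpace 𝔛] (ν : Measure 𝔛) [SigmaFinite ν]
    (f₀ f₁ : 𝔛 → ℝ) (hf₀meas : Measurable f₀) (hf₁meas : Measurable f₁)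
    (hf₀nonneg : ∀ x, 0 ≤ f₀ x) (hf₁nonneg : ∀ x, 0 ≤ f₁ x)
    (hf₀int : ∫ x, f₀ x ∂ν = 1) (hf₁int : ∫ x, f₁ x ∂ν = 1) :
    ∀ α₁ ∈ Set.Icc (0 : ℝ) 1, ∀ α₂ ∈ Set.Icc (0 : ℝ) 1, ∀ a ∈ Set.Icc (0 : ℝ) 1,
      a * ROC ν f₀ f₁ α₁ + (1 - a) * ROC ν f₀ f₁ α₂ ≤
        ROC ν f₀ f₁ (a * α₁ + (1 - a) * α₂) :=
  roc_concave_general ν f₀ f₁ hf₀int hf₁int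
end

section
/- (Theorem 2: the P-functional is uniform under H₀.) Let (X, U) be distributed according to P₀ ⊗ Uniform[0,1], i.e. X has density f₀ with respect to ν and U is an independent standard uniform random variable. Then for every w ∈ [0,1], Pr(P(X,U) ≤ w) = w; that is, P(X,U) has the standard uniform distribution under H₀. -/
/-!
Under `H₀` the randomized Neyman–Pearson test of level `α` rejects with probability exactly `α`:
the threshold `c(α)` satisfies `P₀(Λ > c) ≤ α ≤ P₀(Λ ≥ c)` (right-continuity and left limits of
`t ↦ P₀(Λ > t)`), and the independent uniform `U` fills the gap on `{Λ = c}` with probability `γ`.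
The rejection regions increase with `α`, so `{P ≤ w}` contains every region of level below `w`
and, up to the null set of points rejected at no level, lies in every region of level above `w`;
its probability is squeezed to `w`.
-/

open MeasureTheory Filter Topology Set

namespace ENNReal

lemma ofReal_le_of_forall_mem_Ioo {a : ℝ≥0∞} {x y : ℝ} (hxy : x < y)
    (h : ∀ β ∈ Ioo x y, ENNReal.ofReal β ≤ a) : ENNReal.ofReal y ≤ a :=
  le_of_tendsto ((ENNReal.continuous_ofReal.tendsto y).mono_left nhdsWithin_le_nhds)
    (eventually_of_mem (Ioo_mem_nhdsLT hxy) h)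

lemma le_ofReal_of_forall_mem_Ioo {a : ℝ≥0∞} {x y : ℝ} (hxy : x < y)
    (h : ∀ β ∈ Ioo x y, a ≤ ENNReal.ofReal β) : a ≤ ENNReal.ofReal x :=
  ge_of_tendsto ((ENNReal.continuous_ofReal.tendsto x).mono_left nhdsWithin_le_nhds)
    (eventually_of_mem (Ioo_mem_nhdsGT hxy) h)

end ENNReal

section PValue

variable {Ω : Type*} {R : ℝ → Set Ω}

/-- The least level in `(0, 1)` at which `p` is rejected by the regions `R`;
it is `0` (as `sInf ∅ = 0`) if `p` is rejected at no level. -/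
noncomputable def pValue (R : ℝ → Set Ω) (p : Ω) : ℝ := sInf {α | α ∈ Ioo (0 : ℝ) 1 ∧ p ∈ R α}

lemma pValue_le_of_mem {p : Ω} {α : ℝ} (hα : α ∈ Ioo 0 1) (hp : p ∈ R α) : pValue R p ≤ α :=
  csInf_le ⟨0, fun _ hβ => hβ.1.1.le⟩ ⟨hα, hp⟩

lemma mem_of_pValue_lt (hR : ∀ α α', 0 < α → α ≤ α' → R α ⊆ R α') {p : Ω} {α β : ℝ}
    (hβ : β ∈ Ioo 0 1) (hpβ : p ∈ R β) (hα : pValue R p < α) : p ∈ R α := by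
  obtain ⟨α₀, ⟨hα₀, hp⟩, hlt⟩ :=
    (csInf_lt_iff (s := {α | α ∈ Ioo (0 : ℝ) 1 ∧ p ∈ R α}) ⟨0, fun _ hβ => hβ.1.1.le⟩
      ⟨β, hβ, hpβ⟩).1 hα
  exact hR α₀ α hα₀.1 hlt.le hp

variable [MeasurableSpace Ω] (m : Measure Ω) [IsProbabilityMeasure m]

lemma measure_forall_notMem_eq_zero (hRm : ∀ α, MeasurableSet (R α))
    (hsize : ∀ α ∈ Ioo (0 : ℝ) 1, m (R α) = ENNReal.ofReal α) :
    m {p | ∀ α ∈ Ioo (0 : ℝ) 1, p ∉ R α} = 0 := by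
  refine nonpos_iff_eq_zero.1 (ENNReal.ofReal_zero ▸
    ENNReal.le_ofReal_of_forall_mem_Ioo zero_lt_one fun β hβ => ?_)
  have hβ' : 1 - β ∈ Ioo (0 : ℝ) 1 := ⟨by linarith [hβ.2], by linarith [hβ.1]⟩
  calc m {p | ∀ α ∈ Ioo (0 : ℝ) 1, p ∉ R α} ≤ m (R (1 - β))ᶜ :=
        measure_mono fun p hp => hp _ hβ'
    _ = ENNReal.ofReal β := by
      rw [prob_compl_eq_one_sub (hRm _), hsize _ hβ', ← ENNReal.ofReal_one,
        ← ENNReal.ofReal_sub _ hβ'.1.le, sub_sub_cancel]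

theorem measure_pValue_le (hRm : ∀ α, MeasurableSet (R α))
    (hR : ∀ α α', 0 < α → α ≤ α' → R α ⊆ R α')
    (hsize : ∀ α ∈ Ioo (0 : ℝ) 1, m (R α) = ENNReal.ofReal α) {w : ℝ}
    (hw : w ∈ Icc (0 : ℝ) 1) :
    m {p | pValue R p ≤ w} = ENNReal.ofReal w := by
  obtain ⟨hw0, hw1⟩ := hw
  apply le_antisymm
  · rcases hw1.lt_or_eq with hw1 | rfl
    · refine ENNReal.le_ofReal_of_forall_mem_Ioo hw1 fun α hα => ?_
      have hsub : {p | pValue R p ≤ w} ⊆ R α ∪ {p | ∀ β ∈ Ioo (0 : ℝ) 1, p ∉ R β} := by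
        intro p hp
        by_cases h : ∃ β ∈ Ioo (0 : ℝ) 1, p ∈ R β
        · obtain ⟨β, hβ, hpβ⟩ := h
          exact Or.inl (mem_of_pValue_lt hR hβ hpβ (lt_of_le_of_lt hp hα.1))
        · push Not at h
          exact Or.inr h
      calc m {p | pValue R p ≤ w}
          ≤ m (R α) + m {p | ∀ β ∈ Ioo (0 : ℝ) 1, p ∉ R β} :=
            (measure_mono hsub).trans (measure_union_le _ _)
        _ = ENNReal.ofReal α := by
          rw [measure_forall_notMem_eq_zero m hRm hsize, add_zero,
            hsize α ⟨hw0.trans_lt hα.1, hα.2⟩]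
    · simpa using prob_le_one
  · rcases hw0.eq_or_lt with rfl | hw0
    · simp
    · refine ENNReal.ofReal_le_of_forall_mem_Ioo hw0 fun β hβ => ?_
      have hβ' : β ∈ Ioo (0 : ℝ) 1 := ⟨hβ.1, hβ.2.trans_le hw1⟩
      rw [← hsize β hβ']
      exact measure_mono fun p hp => (pValue_le_of_mem hβ' hp).trans hβ.2.le

end PValue

lemma mul_uniform_measureReal_Iic_div {a b α : ℝ} (hb : 0 ≤ b) (ha : a ≤ α)
    (hab : α ≤ a + b) :
    b * (volume.restrict (Icc (0 : ℝ) 1)).real (Iic ((α - a) / b)) = α - a := by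
  rcases hb.eq_or_lt with rfl | hb
  · simp only [zero_mul]
    linarith
  have hγ0 : 0 ≤ (α - a) / b := div_nonneg (by linarith) hb.le
  have hγ1 : (α - a) / b ≤ 1 := (div_le_one hb).2 (by linarith)
  have hinter : Iic ((α - a) / b) ∩ Icc 0 1 = Icc 0 ((α - a) / b) := by
    ext u
    simp only [mem_inter_iff, mem_Iic, mem_Icc]
    exact ⟨fun h => ⟨h.2.1, h.1⟩, fun h => ⟨h.2, h.1, h.2.trans hγ1⟩⟩
  rw [measureReal_restrict_apply measurableSet_Iic, hinter, Real.volume_real_Icc_of_le hγ0,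
    sub_zero]
  field_simp

section NeymanPearson

variable {𝔛 : Type*} [MeasurableSpace 𝔛] (μ : Measure 𝔛) (Λ : 𝔛 → ℝ)

noncomputable def npThreshold (α : ℝ) : ℝ := sInf {t : ℝ | 0 ≤ t ∧ μ.real {x | Λ x > t} ≤ α}

noncomputable def npRandomization (α : ℝ) : ℝ :=
  (α - μ.real {x | Λ x > npThreshold μ Λ α}) / μ.real {x | Λ x = npThreshold μ Λ α}

/-- The set of `(x, u)` with `δ*(x, u; α) = 1`. -/
def npRejectionRegion (α : ℝ) : Set (𝔛 × ℝ) :=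
  {p | Λ p.1 > npThreshold μ Λ α ∨ (Λ p.1 = npThreshold μ Λ α ∧ p.2 ≤ npRandomization μ Λ α)}

variable {μ Λ} {α α' t : ℝ}

lemma npThreshold_nonneg (α : ℝ) : 0 ≤ npThreshold μ Λ α :=
  Real.sInf_nonneg fun _ ht => ht.1

lemma lt_measureReal_gt_of_lt_npThreshold (ht0 : 0 ≤ t) (ht : t < npThreshold μ Λ α) :
    α < μ.real {x | Λ x > t} := by
  by_contra! h
  exact ht.not_ge (csInf_le ⟨0, fun _ h => h.1⟩ ⟨ht0, h⟩)

lemma measurableSet_npRejectionRegion (hΛ : Measurable Λ) (α : ℝ) :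
    MeasurableSet (npRejectionRegion μ Λ α) :=
  (measurableSet_lt measurable_const (hΛ.comp measurable_fst)).union
    ((measurableSet_eq_fun (hΛ.comp measurable_fst) measurable_const).inter
      (measurableSet_le measurable_snd measurable_const))

variable [IsFiniteMeasure μ]

lemma nonempty_npThreshold_set (hΛ : Measurable Λ) (hα : 0 < α) :
    {t : ℝ | 0 ≤ t ∧ μ.real {x | Λ x > t} ≤ α}.Nonempty := by
  have htend : Tendsto (fun t : ℝ => μ {x | Λ x > t}) atTop (𝓝 0) := by
    have := tendsto_measure_iInter_atTop (μ := μ) (s := fun t : ℝ => {x | Λ x > t})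
      (fun _ => (measurableSet_lt measurable_const hΛ).nullMeasurableSet)
      (fun _ _ hst _ hx => hst.trans_lt hx) ⟨0, measure_ne_top _ _⟩
    rwa [iInter_eq_empty_iff.2 fun x => ⟨Λ x, lt_irrefl (Λ x)⟩, measure_empty] at this
  obtain ⟨t, ht, ht0⟩ :=
    ((htend.eventually (gt_mem_nhds (ENNReal.ofReal_pos.2 hα))).and
      (eventually_ge_atTop 0)).exists
  exact ⟨t, ht0, ENNReal.toReal_le_of_le_ofReal hα.le ht.le⟩

lemma measureReal_gt_le_of_npThreshold_lt (hΛ : Measurable Λ) (hα : 0 < α)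
    (ht : npThreshold μ Λ α < t) : μ.real {x | Λ x > t} ≤ α := by
  obtain ⟨s, ⟨-, hs⟩, hst⟩ :=
    (csInf_lt_iff ⟨0, fun _ h => h.1⟩ (nonempty_npThreshold_set hΛ hα)).1 ht
  exact (measureReal_mono fun x hx => hst.trans hx).trans hs

lemma measureReal_gt_npThreshold_le (hΛ : Measurable Λ) (hα : 0 < α) :
    μ.real {x | Λ x > npThreshold μ Λ α} ≤ α := by
  obtain ⟨u, hu_anti, hu_gt, hu⟩ := exists_seq_strictAnti_tendsto (npThreshold μ Λ α)
  have hunion : ⋃ n, {x | Λ x > u n} = {x | Λ x > npThreshold μ Λ α} := by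
    ext x
    simp only [mem_iUnion, mem_ofPred_eq]
    exact ⟨fun ⟨n, hn⟩ => (hu_gt n).trans hn, fun hx => (hu.eventually (gt_mem_nhds hx)).exists⟩
  have hlim := tendsto_measure_iUnion_atTop (μ := μ) (s := fun n => {x | Λ x > u n})
    (fun _ _ hmn _ hx => (hu_anti.antitone hmn).trans_lt hx)
  rw [hunion] at hlim
  exact le_of_tendsto' ((ENNReal.tendsto_toReal (measure_ne_top μ _)).comp hlim)
    fun n => measureReal_gt_le_of_npThreshold_lt hΛ hα (hu_gt n)

lemma le_measureReal_ge_npThreshold [IsProbabilityMeasure μ] (hΛ0 : ∀ x, 0 ≤ Λ x)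
    (hΛ : Measurable Λ) (hα : α ≤ 1) : α ≤ μ.real {x | Λ x ≥ npThreshold μ Λ α} := by
  rcases (npThreshold_nonneg (μ := μ) (Λ := Λ) α).eq_or_lt with hc | hc
  · simpa [← hc, hΛ0] using hα
  obtain ⟨u, hu_mono, hu_mem, hu⟩ := exists_seq_strictMono_tendsto' hc
  have hinter : ⋂ n, {x | Λ x > u n} = {x | Λ x ≥ npThreshold μ Λ α} := by
    ext x
    simp only [mem_iInter, mem_ofPred_eq]
    exact ⟨fun h => le_of_tendsto' hu fun n => (h n).le, fun hx n => (hu_mem n).2.trans_le hx⟩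
  have hlim := tendsto_measure_iInter_atTop (μ := μ) (s := fun n => {x | Λ x > u n})
    (fun _ => (measurableSet_lt measurable_const hΛ).nullMeasurableSet)
    (fun _ _ hmn _ hx => (hu_mono.monotone hmn).trans_lt hx) ⟨0, measure_ne_top _ _⟩
  rw [hinter] at hlim
  exact ge_of_tendsto' ((ENNReal.tendsto_toReal (measure_ne_top μ _)).comp hlim)
    fun n => (lt_measureReal_gt_of_lt_npThreshold (hu_mem n).1.le (hu_mem n).2).le

lemma npThreshold_anti (hΛ : Measurable Λ) (hα : 0 < α) (hαα' : α ≤ α') :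
    npThreshold μ Λ α' ≤ npThreshold μ Λ α :=
  csInf_le_csInf (s := {t : ℝ | 0 ≤ t ∧ μ.real {x | Λ x > t} ≤ α}) ⟨0, fun _ h => h.1⟩
    (nonempty_npThreshold_set hΛ hα) fun _ ht => ⟨ht.1, ht.2.trans hαα'⟩

lemma npRejectionRegion_mono (hΛ : Measurable Λ) (hα : 0 < α) (hαα' : α ≤ α') :
    npRejectionRegion μ Λ α ⊆ npRejectionRegion μ Λ α' := by
  have hc : npThreshold μ Λ α' ≤ npThreshold μ Λ α := npThreshold_anti hΛ hα hαα'
  rintro ⟨x, u⟩ (hgt | ⟨heq, hu⟩)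
  · exact Or.inl (hc.trans_lt hgt)
  rcases hc.eq_or_lt with hc | hc
  · refine Or.inr ⟨heq.trans hc.symm, hu.trans ?_⟩
    unfold npRandomization
    rw [hc]
    gcongr
  · exact Or.inl (hc.trans_eq heq.symm)

lemma prod_npRejectionRegion [IsProbabilityMeasure μ] (hΛ0 : ∀ x, 0 ≤ Λ x) (hΛ : Measurable Λ)
    (hα : α ∈ Ioo (0 : ℝ) 1) :
    μ.prod (volume.restrict (Icc (0 : ℝ) 1)) (npRejectionRegion μ Λ α) = ENNReal.ofReal α := by
  set c := npThreshold μ Λ α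
  have hsplit : npRejectionRegion μ Λ α =
      {x | Λ x > c} ×ˢ univ ∪ {x | Λ x = c} ×ˢ Iic (npRandomization μ Λ α) := by
    ext ⟨x, u⟩
    simp [npRejectionRegion, c]
  have hdisj : Disjoint {x | Λ x > c} {x | Λ x = c} :=
    disjoint_left.2 fun _ hgt heq => hgt.ne' heq
  have heq_meas : MeasurableSet {x | Λ x = c} := measurableSet_eq_fun hΛ measurable_const
  have hge : μ.real {x | Λ x ≥ c} = μ.real {x | Λ x > c} + μ.real {x | Λ x = c} := by
    rw [← measureReal_union hdisj heq_meas]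
    congr 1
    ext x
    simp [le_iff_lt_or_eq, eq_comm]
  have hmul := mul_uniform_measureReal_Iic_div measureReal_nonneg
    (measureReal_gt_npThreshold_le hΛ hα.1) (hge ▸ le_measureReal_ge_npThreshold hΛ0 hΛ hα.2.le)
  rw [← ofReal_measureReal, hsplit, measureReal_union (disjoint_prod.2 (Or.inl hdisj))
    (heq_meas.prod measurableSet_Iic), measureReal_prod_prod, measureReal_prod_prod,
    measureReal_restrict_apply_univ, Real.volume_real_Icc_of_le zero_le_one, sub_zero, mul_one,
    npRandomization, hmul, add_sub_cancel]

end NeymanPearson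

lemma measureReal_withDensity_ofReal {𝔛 : Type*} [MeasurableSpace 𝔛] {ν : Measure 𝔛}
    [SFinite ν] {f : 𝔛 → ℝ} (hf : Measurable f) (hf0 : ∀ x, 0 ≤ f x) (A : Set 𝔛) :
    (ν.withDensity fun x => ENNReal.ofReal (f x)).real A = ∫ x in A, f x ∂ν := by
  rw [measureReal_def, withDensity_apply' _ A,
    integral_eq_lintegral_of_nonneg_ae (ae_of_all _ hf0) hf.aestronglyMeasurable]

theorem p_functional_uniform_under_H0_general
    {𝔛 : Type*} [MeasurableSpace 𝔛] (ν : Measure 𝔛) [SigmaFinite ν]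
    (f₀ f₁ : 𝔛 → ℝ) (hf₀meas : Measurable f₀) (hf₁meas : Measurable f₁)
    (hf₀nonneg : ∀ x, 0 ≤ f₀ x) (hf₁nonneg : ∀ x, 0 ≤ f₁ x)
    (hf₀int : ∫ x, f₀ x ∂ν = 1)
    (Λ : 𝔛 → ℝ) (hΛ : ∀ x, Λ x = f₁ x / f₀ x)
    (P₀ : Set 𝔛 → ℝ) (hP₀ : ∀ A, P₀ A = ∫ x in A, f₀ x ∂ν)
    (c : ℝ → ℝ) (hc : ∀ α, c α = sInf {t : ℝ | 0 ≤ t ∧ P₀ {x | Λ x > t} ≤ α})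
    (γ : ℝ → ℝ) (hγ : ∀ α, γ α = (α - P₀ {x | Λ x > c α}) / P₀ {x | Λ x = c α})
    (δstar : 𝔛 → ℝ → ℝ → ℝ)
    (hδstar : ∀ x u α, δstar x u α =
      if Λ x > c α ∨ (Λ x = c α ∧ u ≤ γ α) then 1 else 0)
    (Pfun : 𝔛 → ℝ → ℝ)
    (hPfun : ∀ x u, Pfun x u = sInf {α : ℝ | α ∈ Set.Ioo (0 : ℝ) 1 ∧ δstar x u α = 1}) :
    ∀ w ∈ Set.Icc (0 : ℝ) 1,
      ((ν.withDensity fun x => ENNReal.ofReal (f₀ x)).prod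
          (volume.restrict (Set.Icc (0 : ℝ) 1)))
        {p : 𝔛 × ℝ | Pfun p.1 p.2 ≤ w} = ENNReal.ofReal w := by
  intro w hw
  set μ₀ := ν.withDensity fun x => ENNReal.ofReal (f₀ x)
  have hP₀μ₀ : P₀ = μ₀.real :=
    funext fun A => (hP₀ A).trans (measureReal_withDensity_ofReal hf₀meas hf₀nonneg A).symm
  have hμ₀ : IsProbabilityMeasure μ₀ := ⟨(ENNReal.toReal_eq_one_iff _).1 <| by
    rw [← measureReal_def, ← hP₀μ₀, hP₀, setIntegral_univ, hf₀int]⟩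
  have hunif : IsProbabilityMeasure (volume.restrict (Icc (0 : ℝ) 1)) := ⟨by simp⟩
  have hΛm : Measurable Λ := (funext hΛ : Λ = _) ▸ hf₁meas.div hf₀meas
  have hΛ0 : ∀ x, 0 ≤ Λ x := fun x => (hΛ x).symm ▸ div_nonneg (hf₁nonneg x) (hf₀nonneg x)
  subst hP₀μ₀
  obtain rfl : c = npThreshold μ₀ Λ := funext hc
  obtain rfl : γ = npRandomization μ₀ Λ := funext hγ
  have hset : {p : 𝔛 × ℝ | Pfun p.1 p.2 ≤ w} = {p | pValue (npRejectionRegion μ₀ Λ) p ≤ w} := by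
    ext p
    simp only [mem_ofPred_eq, hPfun, hδstar, ite_eq_left_iff, zero_ne_one, imp_false, not_not]
    rfl
  rw [hset]
  exact measure_pValue_le _ (measurableSet_npRejectionRegion hΛm)
    (fun _ _ => npRejectionRegion_mono hΛm) (fun _ => prod_npRejectionRegion hΛ0 hΛm) hw

/-- **Theorem 2: the P-functional is uniform under H₀.** Let `Λ = f₁/f₀` (convention: ratio
`0` when the denominator vanishes), `P₀(A) = ∫_A f₀ dν`,
`c(α) = inf{c ≥ 0 : P₀(Λ > c) ≤ α}`,
`γ(α) = (α − P₀(Λ > c(α)))/P₀(Λ = c(α))` (which is `0` when `P₀(Λ = c(α)) = 0`, by the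
division-by-zero convention), the Neyman–Pearson decision function
`δ*(x,u;α) = 1` iff `Λ(x) > c(α)` or (`Λ(x) = c(α)` and `u ≤ γ(α)`), and the P-functional
`P(x,u) = inf{α ∈ (0,1) : δ*(x,u;α) = 1}`. If `(X,U)` is distributed according to
`P₀ ⊗ Uniform[0,1]`, then for every `w ∈ [0,1]`, `Pr(P(X,U) ≤ w) = w`, i.e. `P(X,U)` is
standard uniform under `H₀`. -/
theorem p_functional_uniform_under_H0
    {𝔛 : Type*} [MeasurableSpace 𝔛] (ν : Measure 𝔛) [SigmaFinite ν]
    (f₀ f₁ : 𝔛 → ℝ) (hf₀meas : Measurable f₀) (hf₁meas : Measurable f₁)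
    (hf₀nonneg : ∀ x, 0 ≤ f₀ x) (hf₁nonneg : ∀ x, 0 ≤ f₁ x)
    (hf₀int : ∫ x, f₀ x ∂ν = 1) (hf₁int : ∫ x, f₁ x ∂ν = 1)
    (Λ : 𝔛 → ℝ) (hΛ : ∀ x, Λ x = f₁ x / f₀ x)
    (P₀ : Set 𝔛 → ℝ) (hP₀ : ∀ A, P₀ A = ∫ x in A, f₀ x ∂ν)
    (c : ℝ → ℝ) (hc : ∀ α, c α = sInf {t : ℝ | 0 ≤ t ∧ P₀ {x | Λ x > t} ≤ α})
    (γ : ℝ → ℝ) (hγ : ∀ α, γ α = (α - P₀ {x | Λ x > c α}) / P₀ {x | Λ x = c α})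
    (δstar : 𝔛 → ℝ → ℝ → ℝ)
    (hδstar : ∀ x u α, δstar x u α =
      if Λ x > c α ∨ (Λ x = c α ∧ u ≤ γ α) then 1 else 0)
    (Pfun : 𝔛 → ℝ → ℝ)
    (hPfun : ∀ x u, Pfun x u = sInf {α : ℝ | α ∈ Set.Ioo (0 : ℝ) 1 ∧ δstar x u α = 1}) :
    ∀ w ∈ Set.Icc (0 : ℝ) 1,
      ((ν.withDensity fun x => ENNReal.ofReal (f₀ x)).prod
          (volume.restrict (Set.Icc (0 : ℝ) 1)))
        {p : 𝔛 × ℝ | Pfun p.1 p.2 ≤ w} = ENNReal.ofReal w :=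
  p_functional_uniform_under_H0_general ν f₀ f₁ hf₀meas hf₁meas hf₀nonneg hf₁nonneg hf₀int Λ hΛ P₀
    hP₀ c hc γ hγ δstar hδstar Pfun hPfun
end

section
/- (Lemma 3: divergence of cumulative decision-based log-likelihood ratios under H₀.) Let I ⊆ (0,1), let ρ̄ : (0,1) → (0,1) satisfy ρ̄(α) > α for all α ∈ (0,1), and suppose there is ε > 0 with sup_{α ∈ I} [ α·log(ρ̄(α)/α) + (1−α)·log((1−ρ̄(α))/(1−α)) ] ≤ −ε. Let (α_m)_{m≥1} ⊆ I, let (r_m)_{m≥1} be real numbers with ρ̄(α_m) ≤ r_m < 1 for each m, and assume Σ_{m=1}^∞ (α_m(1−α_m)/m²)·[log( (r_m/α_m)·((1−α_m)/(1−r_m)) )]² < ∞. Let D_1, D_2, … be independent random variables with D_m ~ Bernoulli(α_m), and set V_m = D_m·log(r_m/α_m) + (1−D_m)·log((1−r_m)/(1−α_m)). Then, almost surely, Σ_{m=1}^{M} V_m → −∞ as M → ∞. -/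
open MeasureTheory ProbabilityTheory Filter
open Topology Finset

/-!
Under `H₀` the increment `V_m` has mean `α_m log(r_m/α_m) + (1-α_m) log((1-r_m)/(1-α_m))`,
which is at most the same expression at `r_m = ρ̄(α_m)`, hence at most `-ε`, while its variance
is `α_m(1-α_m) log((r_m/α_m)((1-α_m)/(1-r_m)))²`. The summability hypothesis is therefore
Kolmogorov's condition `Σ Var V_m / m² < ∞`, under which the centred averages
`(1/M) Σ_{m ≤ M} (V_m - E V_m)` tend to `0` almost surely: the series `Σ (V_m - E V_m)/m` is an
`L²`-bounded martingale, hence converges, and Kronecker's lemma transfers this to the averages.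
So `Σ_{m ≤ M} V_m ≤ -εM + o(M) → -∞`.
-/

theorem tendsto_sum_range_div_zero_of_tendsto_sum_range_div_succ {u : ℕ → ℝ} {L : ℝ}
    (h : Tendsto (fun n => ∑ m ∈ range n, u m / ((m : ℝ) + 1)) atTop (𝓝 L)) :
    Tendsto (fun n => (∑ m ∈ range n, u m) / (n : ℝ)) atTop (𝓝 0) := by
  set T : ℕ → ℝ := fun n => ∑ m ∈ range n, u m / ((m : ℝ) + 1)
  have summation_by_parts : ∀ n : ℕ, ∑ m ∈ range n, u m = n * T n - ∑ m ∈ range n, T m := by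
    intro n
    induction n with
    | zero => simp [T]
    | succ n ih =>
      have hn : ((n : ℝ) + 1) ≠ 0 := by positivity
      have hT_succ : T (n + 1) = T n + u n / ((n : ℝ) + 1) := sum_range_succ _ n
      rw [sum_range_succ, ih, sum_range_succ (f := T), hT_succ]
      push_cast
      field_simp
      ring
  have h_diff : Tendsto (fun n => T n - (n : ℝ)⁻¹ • ∑ m ∈ range n, T m) atTop (𝓝 (L - L)) :=
    h.sub h.cesaro
  rw [sub_self] at h_diff
  refine h_diff.congr fun n => ?_
  rcases Nat.eq_zero_or_pos n with rfl | hn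
  · simp [T]
  · have hn : (n : ℝ) ≠ 0 := Nat.cast_ne_zero.2 hn.ne'
    rw [summation_by_parts, smul_eq_mul]
    field_simp

theorem tendsto_sum_range_atBot_of_le_neg {x e : ℕ → ℝ} {ε : ℝ} (hε : 0 < ε)
    (he : ∀ m, e m ≤ -ε)
    (h : Tendsto (fun n => (∑ m ∈ range n, (x m - e m)) / (n : ℝ)) atTop (𝓝 0)) :
    Tendsto (fun n => ∑ m ∈ range n, x m) atTop atBot := by
  have h_lin : Tendsto (fun n : ℕ => -(ε / 2) * n) atTop atBot :=
    tendsto_natCast_atTop_atTop.const_mul_atTop_of_neg (by linarith)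
  refine tendsto_atBot_mono' atTop ?_ h_lin
  filter_upwards [h.eventually_lt_const (half_pos hε), eventually_ge_atTop 1] with n hn hn1
  have hn_pos : (0 : ℝ) < n := by exact_mod_cast hn1
  have h_fluct : ∑ m ∈ range n, (x m - e m) < ε / 2 * n := (div_lt_iff₀ hn_pos).1 hn
  have h_drift : ∑ m ∈ range n, e m ≤ -ε * n := by
    simpa [mul_comm] using sum_le_sum fun m (_ : m ∈ range n) => he m
  have h_split := sum_add_distrib (s := range n) (f := fun m => x m - e m) (g := e)
  simp only [sub_add_cancel] at h_split
  linarith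

section Kolmogorov

variable {Ω : Type*} [MeasurableSpace Ω] {μ : Measure Ω} [IsProbabilityMeasure μ]
  {X : ℕ → Ω → ℝ}

theorem eLpNorm_one_le_sqrt_variance {Y : Ω → ℝ} (hY : MemLp Y 2 μ) (h0 : μ[Y] = 0) :
    eLpNorm Y 1 μ ≤ ENNReal.ofReal √(Var[Y; μ]) := by
  rw [eLpNorm_one_eq_lintegral_enorm,
    ← ofReal_integral_norm_eq_lintegral_enorm (hY.integrable one_le_two)]
  refine ENNReal.ofReal_le_ofReal (Real.le_sqrt_of_sq_le ?_)
  have h_var_norm := variance_nonneg (fun ω => ‖Y ω‖) μ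
  rw [variance_eq_sub hY.norm] at h_var_norm
  rw [variance_of_integral_eq_zero hY.aemeasurable h0]
  simp only [Pi.pow_apply, Real.norm_eq_abs, sq_abs] at h_var_norm ⊢
  linarith

theorem martingale_sum_range_succ_of_iIndepFun (hX : ∀ m, Measurable (X m))
    (hint : ∀ m, Integrable (X m) μ) (hmean : ∀ m, μ[X m] = 0) (hindep : iIndepFun X μ) :
    Martingale (fun n => ∑ m ∈ range (n + 1), X m)
      (Filtration.natural X fun m => (hX m).stronglyMeasurable) μ := by
  refine martingale_of_condExp_sub_eq_zero_nat (fun n => ?_)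
    (fun n => integrable_finsetSum' _ fun m _ => hint m) fun n => ?_
  · refine Finset.stronglyMeasurable_sum _ fun m hm => ?_
    exact (Filtration.stronglyAdapted_natural _ m).mono
      (Filtration.mono _ (Nat.lt_succ_iff.1 (mem_range.1 hm)))
  · rw [sum_range_succ _ (n + 1), add_sub_cancel_left]
    filter_upwards [hindep.condExp_natural_ae_eq_of_lt (fun m => (hX m).stronglyMeasurable)
      n.lt_succ_self] with ω h
    simp [h, hmean]

theorem ae_exists_tendsto_sum_range_of_summable_variance (hX : ∀ m, Measurable (X m))
    (hL2 : ∀ m, MemLp (X m) 2 μ) (hmean : ∀ m, μ[X m] = 0) (hindep : iIndepFun X μ)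
    (hsum : Summable fun m => Var[X m; μ]) :
    ∀ᵐ ω ∂μ, ∃ c, Tendsto (fun n => ∑ m ∈ range n, X m ω) atTop (𝓝 c) := by
  have hmart := martingale_sum_range_succ_of_iIndepFun hX
    (fun m => (hL2 m).integrable one_le_two) hmean hindep
  have hvar : ∀ n, Var[∑ m ∈ range (n + 1), X m; μ] ≤ ∑' m, Var[X m; μ] := fun n => by
    rw [IndepFun.variance_sum (fun m _ => hL2 m) fun i _ j _ hij => hindep.indepFun hij]
    exact hsum.sum_le_tsum _ fun m _ => variance_nonneg _ _
  have hbdd : ∀ n, eLpNorm (∑ m ∈ range (n + 1), X m) 1 μ ≤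
      ENNReal.ofReal √(∑' m, Var[X m; μ]) := fun n => by
    refine (eLpNorm_one_le_sqrt_variance (memLp_finsetSum' _ fun m _ => hL2 m) ?_).trans ?_
    · simp only [Finset.sum_apply]
      rw [integral_finsetSum _ fun m _ => (hL2 m).integrable one_le_two]
      simp [hmean]
    · gcongr
      exact hvar n
  filter_upwards [hmart.submartingale.exists_ae_tendsto_of_bdd hbdd] with ω ⟨c, hc⟩
  exact ⟨c, (tendsto_add_atTop_iff_nat 1).1 (by simpa using hc)⟩

theorem ae_tendsto_sum_range_sub_integral_div_of_summable_variance
    (hX : ∀ m, Measurable (X m)) (hL2 : ∀ m, MemLp (X m) 2 μ) (hindep : iIndepFun X μ)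
    (hsum : Summable fun m : ℕ => Var[X m; μ] / ((m : ℝ) + 1) ^ 2) :
    ∀ᵐ ω ∂μ, Tendsto (fun n => (∑ m ∈ range n, (X m ω - μ[X m])) / (n : ℝ)) atTop (𝓝 0) := by
  set W : ℕ → Ω → ℝ := fun m ω => ((m : ℝ) + 1)⁻¹ * (X m ω - μ[X m]) with hW
  have hW_meas : ∀ m, Measurable (W m) := fun m => ((hX m).sub_const _).const_mul _
  have hW_L2 : ∀ m, MemLp (W m) 2 μ := fun m => ((hL2 m).sub (memLp_const _)).const_mul _
  have hW_mean : ∀ m, μ[W m] = 0 := fun m => by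
    simp [hW, integral_const_mul, integral_sub ((hL2 m).integrable one_le_two)]
  have hW_var : ∀ m, Var[W m; μ] = Var[X m; μ] / ((m : ℝ) + 1) ^ 2 := fun m => by
    rw [hW, variance_const_mul, variance_sub_const (hL2 m).aestronglyMeasurable]
    field_simp
  have hW_indep : iIndepFun W μ := hindep.comp _ fun m => (measurable_id.sub_const _).const_mul _
  filter_upwards [ae_exists_tendsto_sum_range_of_summable_variance hW_meas hW_L2 hW_mean
    hW_indep (by simpa only [hW_var] using hsum)] with ω ⟨c, hc⟩
  exact tendsto_sum_range_div_zero_of_tendsto_sum_range_div_succ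
    (hc.congr fun n => sum_congr rfl fun m _ => by rw [hW, div_eq_inv_mul])

end Kolmogorov

section ZeroOne

variable {Ω : Type*} [MeasurableSpace Ω] {μ : Measure Ω} {D : Ω → ℝ}

theorem memLp_of_forall_eq_zero_or_one [IsFiniteMeasure μ] (hD : Measurable D)
    (h01 : ∀ ω, D ω = 0 ∨ D ω = 1) (p : ENNReal) : MemLp D p μ :=
  MemLp.of_bound hD.aestronglyMeasurable 1 <| ae_of_all _ fun ω => by
    rcases h01 ω with h | h <;> simp [h]

theorem integral_of_forall_eq_zero_or_one (hD : Measurable D) (h01 : ∀ ω, D ω = 0 ∨ D ω = 1) :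
    μ[D] = μ.real {ω | D ω = 1} := by
  have h_ind : D = {ω | D ω = 1}.indicator fun _ => (1 : ℝ) := by
    funext ω
    rcases h01 ω with h | h <;> simp [h]
  have h_meas : MeasurableSet {ω | D ω = 1} := hD (measurableSet_singleton 1)
  conv_lhs => rw [h_ind]
  rw [integral_indicator_const _ h_meas, smul_eq_mul, mul_one]

theorem variance_of_forall_eq_zero_or_one [IsProbabilityMeasure μ] (hD : Measurable D)
    (h01 : ∀ ω, D ω = 0 ∨ D ω = 1) :
    Var[D; μ] = μ.real {ω | D ω = 1} * (1 - μ.real {ω | D ω = 1}) := by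
  have h_sq : D ^ 2 = D := by
    funext ω
    rcases h01 ω with h | h <;> simp [h]
  rw [variance_eq_sub (memLp_of_forall_eq_zero_or_one hD h01 2), h_sq,
    integral_of_forall_eq_zero_or_one hD h01]
  ring

theorem integral_mul_add_one_sub_mul_of_forall_eq_zero_or_one [IsProbabilityMeasure μ]
    (hD : Measurable D) (h01 : ∀ ω, D ω = 0 ∨ D ω = 1) (x y : ℝ) :
    μ[fun ω => D ω * x + (1 - D ω) * y] =
      μ.real {ω | D ω = 1} * x + (1 - μ.real {ω | D ω = 1}) * y := by
  have h_int : Integrable D μ := (memLp_of_forall_eq_zero_or_one hD h01 1).integrable le_rfl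
  simp_rw [show ∀ ω, D ω * x + (1 - D ω) * y = (x - y) * D ω + y from fun ω => by ring]
  rw [integral_add (h_int.const_mul _) (integrable_const _), integral_const_mul,
    integral_of_forall_eq_zero_or_one hD h01, integral_const, probReal_univ, one_smul]
  ring

theorem variance_mul_add_one_sub_mul_of_forall_eq_zero_or_one [IsProbabilityMeasure μ]
    (hD : Measurable D) (h01 : ∀ ω, D ω = 0 ∨ D ω = 1) (x y : ℝ) :
    Var[fun ω => D ω * x + (1 - D ω) * y; μ] =
      μ.real {ω | D ω = 1} * (1 - μ.real {ω | D ω = 1}) * (x - y) ^ 2 := by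
  simp_rw [show ∀ ω, D ω * x + (1 - D ω) * y = (x - y) * D ω + y from fun ω => by ring]
  rw [variance_add_const (hD.aestronglyMeasurable.const_mul _), variance_const_mul,
    variance_of_forall_eq_zero_or_one hD h01]
  ring

end ZeroOne

theorem mul_log_div_add_mul_log_div_le_of_le {a ρ r : ℝ} (ha : 0 < a) (haρ : a ≤ ρ)
    (hρr : ρ ≤ r) (hr : r < 1) :
    a * Real.log (r / a) + (1 - a) * Real.log ((1 - r) / (1 - a)) ≤
      a * Real.log (ρ / a) + (1 - a) * Real.log ((1 - ρ) / (1 - a)) := by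
  have hρ : 0 < ρ := ha.trans_le haρ
  have hr0 : 0 < r := hρ.trans_le hρr
  have h1ρ : 0 < 1 - ρ := by linarith
  have h1r : 0 < 1 - r := by linarith
  have h1a : 0 < 1 - a := by linarith
  have h_split : Real.log (r / a) = Real.log (ρ / a) + Real.log (r / ρ) := by
    rw [Real.log_div hr0.ne' ha.ne', Real.log_div hρ.ne' ha.ne', Real.log_div hr0.ne' hρ.ne']
    ring
  have h_split' : Real.log ((1 - r) / (1 - a)) =
      Real.log ((1 - ρ) / (1 - a)) + Real.log ((1 - r) / (1 - ρ)) := by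
    rw [Real.log_div h1r.ne' h1a.ne', Real.log_div h1ρ.ne' h1a.ne', Real.log_div h1r.ne' h1ρ.ne']
    ring
  -- `log x ≤ x - 1` bounds the difference by `(r - ρ) (a/ρ - (1-a)/(1-ρ))`, and `a ≤ ρ` signs it
  have h_incr : a * Real.log (r / ρ) + (1 - a) * Real.log ((1 - r) / (1 - ρ)) ≤ 0 :=
    calc a * Real.log (r / ρ) + (1 - a) * Real.log ((1 - r) / (1 - ρ))
        ≤ a * (r / ρ - 1) + (1 - a) * ((1 - r) / (1 - ρ) - 1) := by
          gcongr
          · exact Real.log_le_sub_one_of_pos (div_pos hr0 hρ)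
          · exact Real.log_le_sub_one_of_pos (div_pos h1r h1ρ)
      _ = (r - ρ) * (a / ρ - (1 - a) / (1 - ρ)) := by
          field_simp
          ring
      _ ≤ 0 := by
          refine mul_nonpos_of_nonneg_of_nonpos (by linarith) (sub_nonpos.2 ?_)
          rw [div_le_div_iff₀ hρ h1ρ]
          nlinarith
  rw [h_split, h_split']
  linarith

/-- **Lemma 3: divergence of cumulative decision-based log-likelihood ratios under H₀.**
Let `I ⊆ (0,1)`, let `ρ̄ : (0,1) → (0,1)` satisfy `ρ̄(α) > α` on `(0,1)`, and suppose there
is `ε > 0` with `α·log(ρ̄(α)/α) + (1−α)·log((1−ρ̄(α))/(1−α)) ≤ −ε` for all `α ∈ I`.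
Let `(α_m) ⊆ I` (here `a (m-1)` is `α_m`), let `(r_m)` satisfy `ρ̄(α_m) ≤ r_m < 1`, and
assume `Σ_m (α_m(1−α_m)/m²)·[log((r_m/α_m)·((1−α_m)/(1−r_m)))]² < ∞`. Let `D_1, D_2, …`
be independent with `D_m ~ Bernoulli(α_m)`, and set
`V_m = D_m·log(r_m/α_m) + (1−D_m)·log((1−r_m)/(1−α_m))`. Then, almost surely,
`Σ_{m=1}^{M} V_m → −∞` as `M → ∞`. -/
theorem cumulative_decision_log_likelihood_diverges_under_H0
    (I : Set ℝ) (hI : I ⊆ Set.Ioo (0 : ℝ) 1)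
    (ρbar : ℝ → ℝ)
    (hρbar : ∀ α ∈ Set.Ioo (0 : ℝ) 1, ρbar α ∈ Set.Ioo (0 : ℝ) 1 ∧ α < ρbar α)
    (ε : ℝ) (hε : 0 < ε)
    (hsup : ∀ α ∈ I,
      α * Real.log (ρbar α / α) + (1 - α) * Real.log ((1 - ρbar α) / (1 - α)) ≤ -ε)
    (a : ℕ → ℝ) (ha : ∀ m, a m ∈ I)
    (r : ℕ → ℝ) (hr : ∀ m, ρbar (a m) ≤ r m ∧ r m < 1)
    (hsum : Summable fun m : ℕ =>
      (a m * (1 - a m) / ((m : ℝ) + 1) ^ 2) *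
        (Real.log ((r m / a m) * ((1 - a m) / (1 - r m)))) ^ 2)
    {Ω : Type*} [MeasurableSpace Ω] (μ : Measure Ω) [IsProbabilityMeasure μ]
    (D : ℕ → Ω → ℝ) (hDmeas : ∀ m, Measurable (D m))
    (hD01 : ∀ m ω, D m ω = 0 ∨ D m ω = 1)
    (hindep : iIndepFun D μ)
    (hlaw : ∀ m, μ {ω | D m ω = 1} = ENNReal.ofReal (a m)) :
    ∀ᵐ ω ∂μ, Tendsto
      (fun M => ∑ m ∈ Finset.range M,
        (D m ω * Real.log (r m / a m) +
          (1 - D m ω) * Real.log ((1 - r m) / (1 - a m))))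
      atTop atBot := by
  have ha01 : ∀ m, a m ∈ Set.Ioo (0 : ℝ) 1 := fun m => hI (ha m)
  have hra : ∀ m, a m < r m := fun m => (hρbar _ (ha01 m)).2.trans_le (hr m).1
  have hp : ∀ m, μ.real {ω | D m ω = 1} = a m := fun m => by
    rw [measureReal_def, hlaw, ENNReal.toReal_ofReal (ha01 m).1.le]
  set V : ℕ → Ω → ℝ := fun m ω =>
    D m ω * Real.log (r m / a m) + (1 - D m ω) * Real.log ((1 - r m) / (1 - a m))
  have hV_meas : ∀ m, Measurable (V m) := fun m => by fun_prop
  have hV_L2 : ∀ m, MemLp (V m) 2 μ := fun m =>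
    ((memLp_of_forall_eq_zero_or_one (hDmeas m) (hD01 m) 2).mul_const _).add
      (((memLp_const 1).sub (memLp_of_forall_eq_zero_or_one (hDmeas m) (hD01 m) 2)).mul_const _)
  have hV_indep : iIndepFun V μ := hindep.comp (fun m x =>
    x * Real.log (r m / a m) + (1 - x) * Real.log ((1 - r m) / (1 - a m))) fun m => by fun_prop
  have hV_var : ∀ m, Var[V m; μ] = a m * (1 - a m) *
      Real.log ((r m / a m) * ((1 - a m) / (1 - r m))) ^ 2 := fun m => by
    have h1r : 1 - r m ≠ 0 := by linarith [(hr m).2]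
    have h1a : 1 - a m ≠ 0 := by linarith [(ha01 m).2]
    rw [variance_mul_add_one_sub_mul_of_forall_eq_zero_or_one (hDmeas m) (hD01 m), hp,
      ← inv_div (1 - r m), ← div_eq_mul_inv,
      Real.log_div (div_pos ((ha01 m).1.trans (hra m)) (ha01 m).1).ne' (div_ne_zero h1r h1a)]
  have hV_mean : ∀ m, μ[V m] ≤ -ε := fun m => by
    rw [integral_mul_add_one_sub_mul_of_forall_eq_zero_or_one (hDmeas m) (hD01 m), hp]
    exact (mul_log_div_add_mul_log_div_le_of_le (ha01 m).1 (hρbar _ (ha01 m)).2.le (hr m).1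
      (hr m).2).trans (hsup _ (ha m))
  filter_upwards [ae_tendsto_sum_range_sub_integral_div_of_summable_variance hV_meas hV_L2
    hV_indep (by simpa only [hV_var, mul_div_right_comm] using hsum)] with ω hω
  exact tendsto_sum_range_atBot_of_le_neg hε hV_mean hω
end

section
/- (Lemma 4: divergence of cumulative P-functional log-likelihood ratios under H₀.) For each m ≥ 1 let ρ'_m : (0,1) → (0,∞) be measurable with ∫₀¹ ρ'_m(u) du = 1. Suppose Σ_{m=1}^∞ (1/m²)·∫₀¹ [log ρ'_m(u)]² du < ∞ and that there exists ε > 0 with limsup_{m} ∫₀¹ log ρ'_m(u) du ≤ −ε. Let P_1, P_2, … be independent standard uniform random variables on (0,1). Then, almost surely, Σ_{m=1}^{M} log ρ'_m(P_m) → −∞ as M → ∞. -/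
/-!
Write `log ρ'_m(P_m) = c_m + (m + 1) Z_m`, where `c_m = ∫₀¹ log ρ'_m` and the `Z_m` are independent,
centred, with `Σ Var Z_m ≤ Σ (m + 1)⁻² ∫₀¹ (log ρ'_m)² < ∞`. The partial sums of the `Z_m` form an
`L²`-bounded, hence `L¹`-bounded, martingale, so `Σ Z_m` converges almost surely (Kolmogorov), and
Kronecker's lemma gives `(1/M) Σ_{m<M} (log ρ'_m(P_m) - c_m) → 0`. Since eventually `c_m ≤ -ε/2`,
the drift `Σ_{m<M} c_m` decreases linearly in `M` and dominates.
-/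

open MeasureTheory ProbabilityTheory Filter Topology

lemma sum_range_cast_succ_mul (w : ℕ → ℝ) (n : ℕ) :
    ∑ m ∈ Finset.range n, ((m : ℝ) + 1) * w m
      = n * ∑ m ∈ Finset.range n, w m - ∑ m ∈ Finset.range n, ∑ k ∈ Finset.range m, w k := by
  induction n with
  | zero => simp
  | succ n ih =>
    simp only [Finset.sum_range_succ, ih]
    push_cast
    ring

theorem Filter.Tendsto.kronecker {z : ℕ → ℝ} {L : ℝ}
    (h : Tendsto (fun n => ∑ m ∈ Finset.range n, z m / ((m : ℝ) + 1)) atTop (𝓝 L)) :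
    Tendsto (fun n : ℕ => (∑ m ∈ Finset.range n, z m) / n) atTop (𝓝 0) := by
  have hdiff := h.sub h.cesaro
  rw [sub_self] at hdiff
  refine hdiff.congr' ?_
  filter_upwards [eventually_gt_atTop 0] with n hn
  have hz : ∀ m : ℕ, z m = ((m : ℝ) + 1) * (z m / ((m : ℝ) + 1)) := fun m => by
    field_simp
  rw [Finset.sum_congr rfl fun m _ => hz m, sum_range_cast_succ_mul]
  field_simp

theorem Real.isBoundedUnder_le_of_limsup_neg {α : Type*} {f : Filter α} {u : α → ℝ}
    (h : limsup u f < 0) : IsBoundedUnder (· ≤ ·) f u := by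
  by_contra hu
  -- the `limsup` of a sequence that is not bounded above is the junk value `0`
  rw [Real.limsup_of_not_isBoundedUnder hu] at h
  exact lt_irrefl 0 h

theorem tendsto_sum_atBot_of_eventually_le_neg {b c : ℕ → ℝ} {δ : ℝ} (hδ : 0 < δ)
    (hc : ∀ᶠ m in atTop, c m ≤ -δ)
    (hbc : Tendsto (fun n : ℕ => (∑ m ∈ Finset.range n, (b m - c m)) / n) atTop (𝓝 0)) :
    Tendsto (fun n => ∑ m ∈ Finset.range n, b m) atTop atBot := by
  obtain ⟨N, hN⟩ := eventually_atTop.1 hc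
  set C := ∑ m ∈ Finset.range N, (c m + δ)
  have hsmall : ∀ᶠ n : ℕ in atTop, (∑ m ∈ Finset.range n, (b m - c m)) / n < δ / 2 :=
    hbc.eventually_lt_const (half_pos hδ)
  have hbound : ∀ᶠ n : ℕ in atTop, ∑ m ∈ Finset.range n, b m ≤ C - δ / 2 * n := by
    filter_upwards [hsmall, eventually_ge_atTop N, eventually_gt_atTop 0] with n hsm hNn hn
    have hdrift : ∑ m ∈ Finset.range n, (c m + δ) ≤ C :=
      Finset.sum_le_sum_of_subset_of_nonpos' (Finset.range_mono hNn) fun m hm hmN => by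
        have := hN m (by simpa using hmN)
        linarith
    rw [div_lt_iff₀ (Nat.cast_pos.2 hn)] at hsm
    simp only [Finset.sum_add_distrib, Finset.sum_sub_distrib, Finset.sum_const,
      Finset.card_range, nsmul_eq_mul] at hdrift hsm
    linarith
  refine tendsto_atBot_mono' atTop hbound (tendsto_atBot_add_const_left atTop C ?_)
  exact tendsto_neg_atTop_atBot.comp
    ((tendsto_const_mul_atTop_of_pos (half_pos hδ)).2 tendsto_natCast_atTop_atTop)

section Kolmogorov

variable {Ω : Type*} [MeasurableSpace Ω] {μ : Measure Ω} [IsProbabilityMeasure μ]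

theorem MeasureTheory.MeasurePreserving.variance_const_mul_comp_le {Ω' : Type*}
    [MeasurableSpace Ω'] {ν : Measure Ω'} {P : Ω → Ω'} (hP : MeasurePreserving P μ ν)
    {f : Ω' → ℝ} (hf : AEStronglyMeasurable f ν) (a : ℝ) :
    Var[fun ω => a * f (P ω); μ] ≤ a ^ 2 * ∫ x, f x ^ 2 ∂ν := by
  have : IsProbabilityMeasure ν := hP.map_eq ▸ Measure.isProbabilityMeasure_map hP.aemeasurable
  rw [variance_const_mul, hP.variance_fun_comp hf.aemeasurable]
  gcongr
  exact variance_le_expectation_sq hf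

theorem integral_abs_le_one_add_integral_sq_div_two {Y : Ω → ℝ} (hY : MemLp Y 2 μ) :
    ∫ ω, |Y ω| ∂μ ≤ (1 + ∫ ω, Y ω ^ 2 ∂μ) / 2 := by
  have hsq : Integrable (fun ω => Y ω ^ 2) μ := hY.integrable_sq
  calc ∫ ω, |Y ω| ∂μ ≤ ∫ ω, (1 + Y ω ^ 2) / 2 ∂μ :=
        integral_mono (hY.integrable one_le_two).abs
          (((integrable_const 1).add hsq).div_const 2) fun ω => by
            nlinarith [sq_nonneg (|Y ω| - 1), sq_abs (Y ω)]
    _ = (1 + ∫ ω, Y ω ^ 2 ∂μ) / 2 := by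
      rw [integral_div, integral_add (integrable_const 1) hsq, integral_const]
      simp

variable {Y : ℕ → Ω → ℝ}

theorem integral_sq_sum_eq_sum_variance (hY : ∀ m, MemLp (Y m) 2 μ) (hindep : iIndepFun Y μ)
    (hmean : ∀ m, μ[Y m] = 0) (s : Finset ℕ) :
    ∫ ω, (∑ m ∈ s, Y m ω) ^ 2 ∂μ = ∑ m ∈ s, Var[Y m; μ] := by
  have hsum_mean : μ[∑ m ∈ s, Y m] = 0 := by
    simp only [Finset.sum_apply]
    rw [integral_finsetSum s fun m _ => (hY m).integrable one_le_two]
    simp [hmean]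
  rw [← IndepFun.variance_sum (fun m _ => hY m) fun i _ j _ hij => hindep.indepFun hij,
    variance_of_integral_eq_zero (memLp_finsetSum' s fun m _ => hY m).aemeasurable hsum_mean]
  simp only [Finset.sum_apply]

theorem martingale_sum_range_succ (hmeas : ∀ m, StronglyMeasurable (Y m))
    (hint : ∀ m, Integrable (Y m) μ) (hindep : iIndepFun Y μ) (hmean : ∀ m, μ[Y m] = 0) :
    Martingale (fun n ω => ∑ m ∈ Finset.range (n + 1), Y m ω)
      (Filtration.natural Y hmeas) μ := by
  set ℱ := Filtration.natural Y hmeas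
  have hadapted : StronglyAdapted ℱ fun n ω => ∑ m ∈ Finset.range (n + 1), Y m ω :=
    fun n => Finset.stronglyMeasurable_fun_sum _ fun m hm =>
      (Filtration.stronglyAdapted_natural hmeas).stronglyMeasurable_le
        (Finset.mem_range_succ_iff.1 hm)
  refine martingale_nat hadapted (fun n => integrable_finsetSum _ fun m _ => hint m) fun n => ?_
  have hstep : (fun ω => ∑ m ∈ Finset.range (n + 1 + 1), Y m ω)
      = (fun ω => ∑ m ∈ Finset.range (n + 1), Y m ω) + Y (n + 1) := by
    ext ω
    simp [Finset.sum_range_succ _ (n + 1)]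
  rw [hstep]
  filter_upwards [condExp_add (integrable_finsetSum _ fun m _ => hint m) (hint (n + 1)) (ℱ n),
    hindep.condExp_natural_ae_eq_of_lt hmeas (Nat.lt_succ_self n)] with ω hsum hnext
  rw [hsum, Pi.add_apply, condExp_of_stronglyMeasurable (ℱ.le n) (hadapted n)
    (integrable_finsetSum _ fun m _ => hint m), hnext, hmean, add_zero]

/-- Kolmogorov's convergence criterion. -/
theorem ae_exists_tendsto_sum_sub_integral_of_summable_variance {X : ℕ → Ω → ℝ}
    (hmeas : ∀ m, Measurable (X m)) (hX : ∀ m, MemLp (X m) 2 μ) (hindep : iIndepFun X μ)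
    (hvar : Summable fun m => Var[X m; μ]) :
    ∀ᵐ ω ∂μ, ∃ L, Tendsto (fun n => ∑ m ∈ Finset.range n, (X m ω - μ[X m])) atTop (𝓝 L) := by
  set Y : ℕ → Ω → ℝ := fun m ω => X m ω - μ[X m]
  have hYmeas : ∀ m, StronglyMeasurable (Y m) :=
    fun m => ((hmeas m).sub_const _).stronglyMeasurable
  have hY : ∀ m, MemLp (Y m) 2 μ := fun m => (hX m).sub (memLp_const _)
  have hYindep : iIndepFun Y μ :=
    hindep.comp (fun m x => x - ∫ ω, X m ω ∂μ) fun m => measurable_id.sub_const _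
  have hYmean : ∀ m, μ[Y m] = 0 := fun m => by
    simp [Y, integral_sub ((hX m).integrable one_le_two) (integrable_const _)]
  have hYvar : ∀ m, Var[Y m; μ] = Var[X m; μ] :=
    fun m => variance_sub_const (hmeas m).aestronglyMeasurable _
  have hbdd : ∀ n, eLpNorm (fun ω => ∑ m ∈ Finset.range (n + 1), Y m ω) 1 μ
      ≤ ((1 + ∑' m, Var[X m; μ]) / 2).toNNReal := fun n => by
    have hS : MemLp (fun ω => ∑ m ∈ Finset.range (n + 1), Y m ω) 2 μ :=
      memLp_finsetSum _ fun m _ => hY m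
    rw [eLpNorm_one_eq_lintegral_enorm, ← ofReal_integral_norm_eq_lintegral_enorm
      (hS.integrable one_le_two), ENNReal.ofNNReal_toNNReal]
    refine ENNReal.ofReal_le_ofReal ((integral_abs_le_one_add_integral_sq_div_two hS).trans ?_)
    rw [integral_sq_sum_eq_sum_variance hY hYindep hYmean]
    gcongr
    simp only [hYvar]
    exact hvar.sum_le_tsum _ fun m _ => variance_nonneg _ _
  filter_upwards [(martingale_sum_range_succ hYmeas (fun m => (hY m).integrable one_le_two)
    hYindep hYmean).submartingale.exists_ae_tendsto_of_bdd hbdd] with ω ⟨L, hL⟩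
  exact ⟨L, (tendsto_add_atTop_iff_nat 1).1 hL⟩

end Kolmogorov

theorem cumulative_p_log_likelihood_diverges_under_H0_general
    (ρ' : ℕ → ℝ → ℝ) (hmeas : ∀ m, Measurable (ρ' m))
    (hsq : ∀ m, IntegrableOn (fun u => (Real.log (ρ' m u)) ^ 2) (Set.Ioo (0 : ℝ) 1) volume)
    (hsum : Summable fun m : ℕ =>
      (1 / ((m : ℝ) + 1) ^ 2) * ∫ u in Set.Ioo (0 : ℝ) 1, (Real.log (ρ' m u)) ^ 2)
    (ε : ℝ) (hε : 0 < ε)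
    (hlimsup : limsup (fun m => ∫ u in Set.Ioo (0 : ℝ) 1, Real.log (ρ' m u)) atTop ≤ -ε)
    {Ω : Type*} [MeasurableSpace Ω] (μ : Measure Ω) [IsProbabilityMeasure μ]
    (P : ℕ → Ω → ℝ) (hPmeas : ∀ m, Measurable (P m))
    (hindep : iIndepFun P μ)
    (hlaw : ∀ m, μ.map (P m) = volume.restrict (Set.Ioo (0 : ℝ) 1)) :
    ∀ᵐ ω ∂μ, Tendsto
      (fun M => ∑ m ∈ Finset.range M, Real.log (ρ' m (P m ω)))
      atTop atBot := by
  set g : ℕ → ℝ → ℝ := fun m u => Real.log (ρ' m u)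
  set c : ℕ → ℝ := fun m => ∫ u in Set.Ioo (0 : ℝ) 1, g m u
  have hg : ∀ m, Measurable (g m) := fun m => (hmeas m).log
  have hP : ∀ m, MeasurePreserving (P m) μ (volume.restrict (Set.Ioo (0 : ℝ) 1)) :=
    fun m => ⟨hPmeas m, hlaw m⟩
  set X : ℕ → Ω → ℝ := fun m ω => 1 / ((m : ℝ) + 1) * g m (P m ω)
  have hX : ∀ m, MemLp (X m) 2 μ := fun m =>
    (((memLp_two_iff_integrable_sq (hg m).aestronglyMeasurable).2 (hsq m)).comp_measurePreserving
      (hP m)).const_mul _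
  have hmean : ∀ m : ℕ, μ[X m] = 1 / ((m : ℝ) + 1) * c m := fun m => by
    rw [integral_const_mul, ← integral_map (hPmeas m).aemeasurable
      (hg m).aestronglyMeasurable, hlaw m]
  have hconv := ae_exists_tendsto_sum_sub_integral_of_summable_variance (X := X)
    (fun m => measurable_const.mul ((hg m).comp (hPmeas m))) hX
    (hindep.comp (fun m (u : ℝ) => 1 / ((m : ℝ) + 1) * g m u) fun m => measurable_const.mul (hg m))
    (hsum.of_nonneg_of_le (fun m => variance_nonneg _ _) fun m =>
      ((hP m).variance_const_mul_comp_le (hg m).aestronglyMeasurable _).trans_eq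
        (by rw [one_div_pow]))
  have hdrift : ∀ᶠ m in atTop, c m ≤ -(ε / 2) :=
    (eventually_lt_of_limsup_lt (by linarith) (Real.isBoundedUnder_le_of_limsup_neg
      (by linarith))).mono fun m hm => hm.le
  filter_upwards [hconv] with ω ⟨L, hL⟩
  refine tendsto_sum_atBot_of_eventually_le_neg (half_pos hε) hdrift
    (Filter.Tendsto.kronecker (L := L) (hL.congr fun n => Finset.sum_congr rfl fun m _ => ?_))
  rw [hmean]
  ring

/-- **Lemma 4: divergence of cumulative P-functional log-likelihood ratios under H₀.**
For each `m` let `ρ'_m : (0,1) → (0,∞)` be measurable with `∫₀¹ ρ'_m(u) du = 1`. Suppose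
`Σ_m (1/m²)·∫₀¹ [log ρ'_m(u)]² du < ∞` (in particular each such integral is finite) and
`limsup_m ∫₀¹ log ρ'_m(u) du ≤ −ε` for some `ε > 0`. If `P_1, P_2, …` are independent
standard uniform random variables on `(0,1)`, then, almost surely,
`Σ_{m=1}^{M} log ρ'_m(P_m) → −∞` as `M → ∞`. -/
theorem cumulative_p_log_likelihood_diverges_under_H0
    (ρ' : ℕ → ℝ → ℝ) (hmeas : ∀ m, Measurable (ρ' m))
    (hpos : ∀ m, ∀ u ∈ Set.Ioo (0 : ℝ) 1, 0 < ρ' m u)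
    (hone : ∀ m, ∫ u in Set.Ioo (0 : ℝ) 1, ρ' m u = 1)
    (hsq : ∀ m, IntegrableOn (fun u => (Real.log (ρ' m u)) ^ 2) (Set.Ioo (0 : ℝ) 1) volume)
    (hsum : Summable fun m : ℕ =>
      (1 / ((m : ℝ) + 1) ^ 2) * ∫ u in Set.Ioo (0 : ℝ) 1, (Real.log (ρ' m u)) ^ 2)
    (ε : ℝ) (hε : 0 < ε)
    (hlimsup : limsup (fun m => ∫ u in Set.Ioo (0 : ℝ) 1, Real.log (ρ' m u)) atTop ≤ -ε)
    {Ω : Type*} [MeasurableSpace Ω] (μ : Measure Ω) [IsProbabilityMeasure μ]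
    (P : ℕ → Ω → ℝ) (hPmeas : ∀ m, Measurable (P m))
    (hindep : iIndepFun P μ)
    (hlaw : ∀ m, μ.map (P m) = volume.restrict (Set.Ioo (0 : ℝ) 1)) :
    ∀ᵐ ω ∂μ, Tendsto
      (fun M => ∑ m ∈ Finset.range M, Real.log (ρ' m (P m ω)))
      atTop atBot :=
  cumulative_p_log_likelihood_diverges_under_H0_general ρ' hmeas hsq hsum ε hε hlimsup μ P hPmeas
    hindep hlaw
end
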